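/- Let φ : T_OP(X, X') → T_OP(Y, Y') be a semigroup isomorphism with induced map θ_φ. If α ∈ T_OP(X, X') is idempotent, then θ_φ(ran α) = ran(φ(α)). -/

import Mathlib

open Set Function

/-- The semigroup of order-preserving self-maps of `X` with range contained in `X'`. -/
def OPR {X : Type*} [LinearOrder X] (X' : Set X) : Set (X → X) :=
  {f | Monotone f ∧ Set.range f ⊆ X'}

/-- `φ` is a semigroup isomorphism from `T_OP(X, X')` onto `T_OP(Y, Y')`
(composition written left-to-right: `f * g = g ∘ f`). -/
def IsSgIso {X Y : Type*} [LinearOrder X] [LinearOrder Y] (X' : Set X) (Y' : Set Y)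
    (φ : (X → X) → (Y → Y)) : Prop :=
  Set.BijOn φ (OPR X') (OPR Y') ∧
    ∀ f ∈ OPR X', ∀ g ∈ OPR X', φ (g ∘ f) = φ g ∘ φ f

/-! Composing `α` with the constant map at `a` gives the constant map at `α a`, so the
multiplicativity of `φ` together with `φ (const a) = const (θ a)` yields `φ α (θ a) = θ (α a)`
for `a ∈ X'`: `θ` intertwines `α` and `φ α`. For idempotents the ranges are the fixed-point
sets, and a bijection intertwining two maps carries the fixed points of one onto those of
the other. -/

lemma const_mem_OPR {X : Type*} [LinearOrder X] (X' : Set X) {a : X} (ha : a ∈ X') :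
    const X a ∈ OPR X' :=
  ⟨monotone_const, range_subset_iff.2 fun _ => ha⟩

lemma image_range_eq_range_of_intertwine {X Y : Type*} {X' : Set X} {α : X → X} {β : Y → Y}
    {θ : X → Y} (hα : α ∘ α = α) (hβ : β ∘ β = β) (hαX' : range α ⊆ X')
    (hβθ : range β ⊆ θ '' X') (hθ : InjOn θ X') (hint : ∀ a ∈ X', β (θ a) = θ (α a)) :
    θ '' range α = range β := by
  ext b
  constructor
  · rintro ⟨_, ⟨x, rfl⟩, rfl⟩
    exact ⟨θ (α x), by rw [hint _ (hαX' ⟨x, rfl⟩), ← comp_apply (f := α), hα]⟩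
  · rintro ⟨y, rfl⟩
    obtain ⟨a, ha, hay⟩ := hβθ ⟨y, rfl⟩
    have hfix : α a = a := hθ (hαX' ⟨a, rfl⟩) ha <| by
      rw [← hint a ha, hay, ← comp_apply (f := β), hβ]
    exact ⟨a, ⟨a, hfix⟩, hay⟩

namespace IsSgIso

variable {X Y : Type*} [LinearOrder X] [LinearOrder Y] {X' : Set X} {Y' : Set Y}
  {φ : (X → X) → (Y → Y)} {α : X → X}

lemma map_mem (hφ : IsSgIso X' Y' φ) (hα : α ∈ OPR X') : φ α ∈ OPR Y' :=
  hφ.1.mapsTo hα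

lemma map_idempotent (hφ : IsSgIso X' Y' φ) (hα : α ∈ OPR X') (hidem : α ∘ α = α) :
    φ α ∘ φ α = φ α := by
  rw [← hφ.2 α hα α hα, hidem]

lemma apply_eq_of_map_const (hφ : IsSgIso X' Y' φ) {θ : X → Y}
    (hθ : ∀ a ∈ X', φ (const X a) = const Y (θ a)) (hα : α ∈ OPR X') {a : X} (ha : a ∈ X') :
    φ α (θ a) = θ (α a) := by
  have hcomp : φ (const X (α a)) = φ α ∘ φ (const X a) :=
    hφ.2 (const X a) (const_mem_OPR X' ha) α hα
  rw [hθ a ha, hθ (α a) (hα.2 ⟨a, rfl⟩)] at hcomp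
  exact (congrFun hcomp (θ a)).symm

end IsSgIso

theorem stmt_8_general {X Y : Type*} [LinearOrder X] [LinearOrder Y] (X' : Set X) (Y' : Set Y)
    (φ : (X → X) → (Y → Y)) (hφ : IsSgIso X' Y' φ)
    (θ : X → Y) (hbij : Set.BijOn θ X' Y')
    (hθ : ∀ a ∈ X', φ (Function.const X a) = Function.const Y (θ a)) :
    ∀ α ∈ OPR X', α ∘ α = α → θ '' Set.range α = Set.range (φ α) := by
  intro α hα hidem
  exact image_range_eq_range_of_intertwine hidem (hφ.map_idempotent hα hidem) hα.2
    (hbij.image_eq ▸ (hφ.map_mem hα).2) hbij.injOn fun a ha =>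
      hφ.apply_eq_of_map_const hθ hα ha

/-- if `α` is idempotent then `θ_φ(ran α) = ran(φ(α))`. -/
theorem stmt_8 {X Y : Type*} [LinearOrder X] [LinearOrder Y] (X' : Set X) (Y' : Set Y)
    (hX' : X'.Nontrivial) (hY' : Y'.Nontrivial)
    (φ : (X → X) → (Y → Y)) (hφ : IsSgIso X' Y' φ)
    (θ : X → Y) (hbij : Set.BijOn θ X' Y')
    (hθ : ∀ a ∈ X', φ (Function.const X a) = Function.const Y (θ a)) :
    ∀ α ∈ OPR X', α ∘ α = α → θ '' Set.range α = Set.range (φ α) :=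
  stmt_8_general X' Y' φ hφ θ hbij hθ
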